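/- arXiv:2201.11183 — 3 statements merged into one kernel-verified Lean document; each statement's English description precedes it below -/
import Mathlib

section
/- With the distribution P(I) ∝ e_Iᵀ L⁻¹ e_I over subsets I ⊆ [n] of size τ, for every x ∈ ℝ^n it holds that 𝔼_I[‖G_I x‖²_L] = ((τ−1)/(n−1)) ‖G_{[n]} x‖²_L, where ‖v‖²_L = vᵀ L v. -/
open Matrix BigOperators Finset

/-!
Writing `a i = (L i)⁻¹`, `c I = ∑_{i ∈ I} a i` and `m_I` for the `a`-weighted mean of `x` on `I`,
one computes `‖G_I x‖²_L = ∑_{i ∈ I} a i (x i - m_I)²`, so that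
`c I · ‖G_I x‖²_L = ∑_{i, j ∈ I} a i a j x j (x j - x i)`, a sum over pairs with vanishing diagonal.
Since `P(I) ∝ c I`, the expectation is a ratio of sums over `τ`-subsets of single and pair sums;
each pair of distinct indices lies in `C(n-2, τ-2)` of them and each index in `C(n-1, τ-1)`,
and `C(n-2, τ-2) / C(n-1, τ-1) = (τ-1)/(n-1)`.
-/

section Counting

variable {α M : Type*} [DecidableEq α] [AddCommMonoid M]

lemma sum_powersetCard_ite_subset {s u : Finset α} {k : ℕ} (hsu : s ⊆ u) (hsk : #s ≤ k) (a : M) :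
    ∑ I ∈ u.powersetCard k, (if s ⊆ I then a else 0) = (#u - #s).choose (k - #s) • a := by
  rw [← sum_filter, sum_const, card_filter_powersetCard_subset s u k hsu hsk]

lemma sum_powersetCard_sum_mem (u : Finset α) {k : ℕ} (hk : 1 ≤ k) (g : α → M) :
    ∑ I ∈ u.powersetCard k, ∑ i ∈ I, g i = (#u - 1).choose (k - 1) • ∑ i ∈ u, g i := by
  calc ∑ I ∈ u.powersetCard k, ∑ i ∈ I, g i
      = ∑ I ∈ u.powersetCard k, ∑ i ∈ u, if {i} ⊆ I then g i else 0 := by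
        refine sum_congr rfl fun I hI => ?_
        simp only [singleton_subset_iff]
        rw [sum_ite_mem, inter_eq_right.2 (mem_powersetCard.1 hI).1]
    _ = ∑ i ∈ u, (#u - 1).choose (k - 1) • g i := by
        rw [sum_comm]
        refine sum_congr rfl fun i hi => ?_
        rw [sum_powersetCard_ite_subset (singleton_subset_iff.2 hi) (by simpa using hk),
          card_singleton]
    _ = (#u - 1).choose (k - 1) • ∑ i ∈ u, g i := (smul_sum ..).symm

lemma sum_powersetCard_sum_sum_mem (u : Finset α) {k : ℕ} (hk : 2 ≤ k) (f : α → α → M)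
    (hf : ∀ i, f i i = 0) :
    ∑ I ∈ u.powersetCard k, ∑ i ∈ I, ∑ j ∈ I, f i j
      = (#u - 2).choose (k - 2) • ∑ i ∈ u, ∑ j ∈ u, f i j := by
  calc ∑ I ∈ u.powersetCard k, ∑ i ∈ I, ∑ j ∈ I, f i j
      = ∑ I ∈ u.powersetCard k, ∑ i ∈ u, ∑ j ∈ u, if {i, j} ⊆ I then f i j else 0 := by
        refine sum_congr rfl fun I hI => ?_
        have hsum (g : α → M) : ∑ i ∈ I, g i = ∑ i ∈ u, if i ∈ I then g i else 0 := by
          rw [sum_ite_mem, inter_eq_right.2 (mem_powersetCard.1 hI).1]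
        simp only [insert_subset_iff, singleton_subset_iff, ite_and, hsum (fun i => ∑ j ∈ I, f i j)]
        refine sum_congr rfl fun i _ => ?_
        split_ifs <;> simp [hsum]
    _ = ∑ i ∈ u, ∑ j ∈ u, (#u - 2).choose (k - 2) • f i j := by
        rw [sum_comm]
        refine sum_congr rfl fun i hi => ?_
        rw [sum_comm]
        refine sum_congr rfl fun j hj => ?_
        obtain rfl | hij := eq_or_ne i j
        · simp [hf]
        rw [sum_powersetCard_ite_subset (by simp [insert_subset_iff, hi, hj])
          (by rw [card_pair hij]; exact hk), card_pair hij]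
    _ = (#u - 2).choose (k - 2) • ∑ i ∈ u, ∑ j ∈ u, f i j := by simp only [smul_sum]

end Counting

lemma choose_sub_two_div_choose_sub_one {K : Type*} [Field K] [CharZero K] {n k : ℕ}
    (hk : 2 ≤ k) (hkn : k ≤ n) :
    ((n - 2).choose (k - 2) : K) / (n - 1).choose (k - 1) = ((k : K) - 1) / ((n : K) - 1) := by
  obtain ⟨k, rfl⟩ := Nat.exists_eq_add_of_le' hk
  obtain ⟨n, rfl⟩ := Nat.exists_eq_add_of_le' (hk.trans hkn)
  have hchoose : ((n + 1).choose (k + 1) : K) ≠ 0 := by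
    exact_mod_cast (Nat.choose_pos (by omega)).ne'
  have hpascal : ((n + 1) * n.choose k : K) = (n + 1).choose (k + 1) * (k + 1) := by
    exact_mod_cast Nat.add_one_mul_choose_eq n k
  simp only [Nat.add_sub_cancel, Nat.add_succ_sub_one, Nat.cast_add, Nat.cast_ofNat,
    add_sub_assoc, show (2 : K) - 1 = 1 by norm_num]
  rw [div_eq_div_iff hchoose (Nat.cast_add_one_ne_zero n)]
  linear_combination hpascal

lemma mul_sum_mul_sub_mean_sq {α K : Type*} [Field K] (I : Finset α) (a x : α → K)
    (hc : ∑ i ∈ I, a i ≠ 0) :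
    (∑ i ∈ I, a i) * ∑ i ∈ I, a i * (x i - (∑ i ∈ I, a i)⁻¹ * ∑ i ∈ I, a i * x i) ^ 2 =
      ∑ i ∈ I, ∑ j ∈ I, a i * a j * x j * (x j - x i) := by
  set c := ∑ i ∈ I, a i
  set T := ∑ i ∈ I, a i * x i
  have hexpand (i : α) : a i * (x i - c⁻¹ * T) ^ 2 =
      a i * x i ^ 2 - 2 * c⁻¹ * T * (a i * x i) + (c⁻¹ * T) ^ 2 * a i := by ring
  have hpairs : ∑ i ∈ I, ∑ j ∈ I, a i * a j * x j * (x j - x i) =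
      c * ∑ i ∈ I, a i * x i ^ 2 - T ^ 2 := by
    rw [sq T, sum_mul_sum, sum_mul_sum, ← sum_sub_distrib]
    refine sum_congr rfl fun i _ => ?_
    rw [← sum_sub_distrib]
    exact sum_congr rfl fun j _ => by ring
  simp only [hexpand, sum_add_distrib, sum_sub_distrib, ← mul_sum, hpairs]
  field_simp
  ring

section CenteredInv

variable {α K : Type*} [Fintype α] [DecidableEq α] [Field K]

/-- The paper's `G_I` for the diagonal matrix `diagonal L`. -/
def centeredInv (L : α → K) (I : Finset α) : Matrix α α K :=
  diagonal (fun i => (if i ∈ I then 1 else 0) * (L i)⁻¹) -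
    (∑ i ∈ I, (L i)⁻¹)⁻¹ • vecMulVec (fun i => (L i)⁻¹ * if i ∈ I then 1 else 0)
      (fun i => (L i)⁻¹ * if i ∈ I then 1 else 0)

lemma centeredInv_mulVec_apply (L x : α → K) (I : Finset α) (j : α) :
    (centeredInv L I *ᵥ x) j = if j ∈ I then
      (L j)⁻¹ * (x j - (∑ i ∈ I, (L i)⁻¹)⁻¹ * ∑ i ∈ I, (L i)⁻¹ * x i) else 0 := by
  have hT : (fun i => (L i)⁻¹ * if i ∈ I then 1 else 0) ⬝ᵥ x = ∑ i ∈ I, (L i)⁻¹ * x i := by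
    simp only [dotProduct, mul_ite, mul_one, mul_zero, ite_mul, zero_mul, sum_ite_mem, univ_inter]
  rw [centeredInv, sub_mulVec, smul_mulVec, vecMulVec_mulVec, hT, Pi.sub_apply, mulVec_diagonal]
  simp only [Pi.smul_apply, op_smul_eq_mul, smul_eq_mul]
  split_ifs <;> ring

lemma centeredInv_quadForm (L x : α → K) (I : Finset α) (hL : ∀ i ∈ I, L i ≠ 0) :
    (centeredInv L I *ᵥ x) ⬝ᵥ (diagonal L *ᵥ (centeredInv L I *ᵥ x)) =
      ∑ i ∈ I, (L i)⁻¹ * (x i - (∑ i ∈ I, (L i)⁻¹)⁻¹ * ∑ i ∈ I, (L i)⁻¹ * x i) ^ 2 := by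
  simp only [dotProduct, mulVec_diagonal, centeredInv_mulVec_apply, mul_ite, ite_mul, mul_zero,
    zero_mul, sum_ite_mem, univ_inter, inter_self]
  refine sum_congr rfl fun i hi => ?_
  field_simp [hL i hi]

end CenteredInv

/-- Under the sampling distribution `P(I) ∝ e_Iᵀ L⁻¹ e_I` over subsets of size τ,
for every x, `𝔼_I[‖G_I x‖²_L] = ((τ−1)/(n−1)) ‖G_{[n]} x‖²_L`. -/
theorem stmt5 {n : ℕ} (τ : ℕ) (hτ : 2 ≤ τ) (hτn : τ ≤ n)
    (L : Fin n → ℝ) (hL : ∀ i, 0 < L i) (x : Fin n → ℝ) :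
    let eI : Finset (Fin n) → (Fin n → ℝ) := fun I i => if i ∈ I then 1 else 0
    let c : Finset (Fin n) → ℝ := fun I => ∑ i ∈ I, (L i)⁻¹
    let v : Finset (Fin n) → (Fin n → ℝ) := fun I i => (L i)⁻¹ * eI I i
    let G : Finset (Fin n) → Matrix (Fin n) (Fin n) ℝ := fun I =>
      Matrix.diagonal (fun i => eI I i * (L i)⁻¹) -
        (c I)⁻¹ • Matrix.vecMulVec (v I) (v I)
    let Psets := Finset.powersetCard τ (Finset.univ : Finset (Fin n))
    let p : Finset (Fin n) → ℝ := fun I => c I / ∑ J ∈ Psets, c J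
    let quadL : (Fin n → ℝ) → ℝ := fun w => w ⬝ᵥ (Matrix.diagonal L *ᵥ w)
    ∑ I ∈ Psets, p I * quadL (G I *ᵥ x)
      = (((τ : ℝ) - 1) / ((n : ℝ) - 1)) * quadL (G Finset.univ *ᵥ x) := by
  intro eI c v G Psets p quadL
  set f : Fin n → Fin n → ℝ := fun i j => (L i)⁻¹ * (L j)⁻¹ * x j * (x j - x i)
  have hc_pos (I : Finset (Fin n)) (hI : I.Nonempty) : 0 < c I :=
    sum_pos (fun i _ => inv_pos.2 (hL i)) hI
  have hquad (I : Finset (Fin n)) (hI : I.Nonempty) :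
      c I * quadL (G I *ᵥ x) = ∑ i ∈ I, ∑ j ∈ I, f i j := by
    rw [← mul_sum_mul_sub_mean_sq I _ x (hc_pos I hI).ne']
    exact congrArg (c I * ·) (centeredInv_quadForm L x I fun i _ => (hL i).ne')
  have hc_sum : ∑ J ∈ Psets, c J = (n - 1).choose (τ - 1) * c univ := by
    simpa using sum_powersetCard_sum_mem univ (by omega : 1 ≤ τ) (fun i => (L i)⁻¹)
  have hf_sum : ∑ I ∈ Psets, ∑ i ∈ I, ∑ j ∈ I, f i j =
      (n - 2).choose (τ - 2) * ∑ i, ∑ j, f i j := by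
    simpa using sum_powersetCard_sum_sum_mem univ hτ f (by simp [f])
  have hU : (univ : Finset (Fin n)).Nonempty := ⟨⟨0, by omega⟩, mem_univ _⟩
  calc ∑ I ∈ Psets, p I * quadL (G I *ᵥ x)
      = (∑ J ∈ Psets, c J)⁻¹ * ∑ I ∈ Psets, c I * quadL (G I *ᵥ x) := by
        rw [mul_sum]
        exact sum_congr rfl fun I _ => by simp only [p]; ring
    _ = (∑ J ∈ Psets, c J)⁻¹ * ∑ I ∈ Psets, ∑ i ∈ I, ∑ j ∈ I, f i j := by
        refine congrArg _ (sum_congr rfl fun I hI => hquad I ?_)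
        exact card_pos.1 (by rw [(mem_powersetCard.1 hI).2]; omega)
    _ = ((n - 2).choose (τ - 2) / (n - 1).choose (τ - 1) : ℝ) *
          (c univ * quadL (G univ *ᵥ x) / c univ) := by
        rw [hc_sum, hf_sum, hquad univ hU]
        ring
    _ = ((τ : ℝ) - 1) / ((n : ℝ) - 1) * quadL (G univ *ᵥ x) := by
        rw [choose_sub_two_div_choose_sub_one hτ hτn, mul_div_cancel_left₀ _ (hc_pos univ hU).ne']
end

section
/- With the distribution P(I) ∝ e_Iᵀ L⁻¹ e_I over subsets I ⊆ [n] of size τ, for all x, y ∈ ℝ^n with Σ_i y_i = 0, it holds that 𝔼_I[⟨G_I x, y⟩_L] = ((τ−1)/(n−1)) ⟨x, y⟩, where ⟨u,v⟩_L = uᵀ L v. -/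
/-!
Expanding `G_I`, one gets `⟨G_I x, y⟩_L = ∑_{i∈I} x_i y_i - c_I⁻¹ (∑_{i∈I} x_i / L_i) (∑_{i∈I} y_i)`
with `c_I = ∑_{i∈I} 1 / L_i`. The sampling weight `p_I ∝ c_I` cancels `c_I⁻¹`, so the expectation
becomes a sum over `τ`-subsets of products of two subset sums. Double counting evaluates these: a
single index lies in `C(n-1, τ-1)` subsets and a pair of distinct indices in `C(n-2, τ-2)`. The
diagonal contributions of the two products cancel, the cross term of the second vanishes since
`∑ y_i = 0`, and what remains is `C(n-2, τ-2) / C(n-1, τ-1) ⟨x, y⟩ = (τ-1)/(n-1) ⟨x, y⟩`.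
-/

open Matrix Finset

section Counting

variable {ι : Type*} [Fintype ι] [DecidableEq ι] {k : ℕ}

lemma card_filter_powersetCard_mem (hk : 1 ≤ k) (i : ι) :
    #{I ∈ powersetCard k (univ : Finset ι) | i ∈ I} = (Fintype.card ι - 1).choose (k - 1) := by
  simpa using card_filter_powersetCard_subset {i} univ k (subset_univ _) (by simpa using hk)

lemma card_filter_powersetCard_mem_and_mem (hk : 2 ≤ k) {i j : ι} (hij : i ≠ j) :
    #{I ∈ powersetCard k (univ : Finset ι) | i ∈ I ∧ j ∈ I}
      = (Fintype.card ι - 2).choose (k - 2) := by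
  simpa [card_pair hij, insert_subset_iff] using
    card_filter_powersetCard_subset {i, j} univ k (subset_univ _) (by rwa [card_pair hij])

lemma sum_powersetCard_sum {R : Type*} [Semiring R] (hk : 1 ≤ k) (f : ι → R) :
    ∑ I ∈ powersetCard k univ, ∑ i ∈ I, f i
      = (Fintype.card ι - 1).choose (k - 1) * ∑ i, f i := by
  rw [sum_comm' (t' := univ) (s' := fun i => {I ∈ powersetCard k univ | i ∈ I}) (by simp),
    mul_sum]
  simp_rw [sum_const, nsmul_eq_mul, card_filter_powersetCard_mem hk]

lemma sum_powersetCard_sum_mul_sum {R : Type*} [CommRing R] (hk : 2 ≤ k) (f g : ι → R) :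
    ∑ I ∈ powersetCard k univ, (∑ i ∈ I, f i) * ∑ j ∈ I, g j
      = ((Fintype.card ι - 2).choose (k - 2) : R) * ((∑ i, f i) * ∑ j, g j)
        + (((Fintype.card ι - 1).choose (k - 1) : R) - (Fintype.card ι - 2).choose (k - 2))
          * ∑ i, f i * g i := by
  set A : R := Nat.cast ((Fintype.card ι - 2).choose (k - 2))
  set B : R := Nat.cast ((Fintype.card ι - 1).choose (k - 1))
  have hcount : ∀ i j : ι, (#{I ∈ powersetCard k univ | i ∈ I ∧ j ∈ I} : R)
      = A + if i = j then B - A else 0 := by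
    intro i j
    rcases eq_or_ne i j with rfl | hij
    · simp [B, card_filter_powersetCard_mem (by omega : 1 ≤ k)]
    · simp [hij, A, card_filter_powersetCard_mem_and_mem hk hij]
  calc ∑ I ∈ powersetCard k univ, (∑ i ∈ I, f i) * ∑ j ∈ I, g j
      = ∑ p : ι × ι, ∑ I ∈ powersetCard k univ with p.1 ∈ I ∧ p.2 ∈ I, f p.1 * g p.2 := by
        simp_rw [sum_mul_sum, ← sum_product' (f := fun i j => f i * g j)]
        exact sum_comm' (by simp)
    _ = ∑ i, ∑ j, (A + if i = j then B - A else 0) * (f i * g j) := by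
        simp_rw [sum_const, nsmul_eq_mul, hcount, Fintype.sum_prod_type]
    _ = A * ((∑ i, f i) * ∑ j, g j) + (B - A) * ∑ i, f i * g i := by
        simp only [add_mul, ite_mul, zero_mul, sum_add_distrib, sum_ite_eq, mem_univ, if_true,
          ← mul_sum, sum_mul_sum]

lemma sum_powersetCard_sum_mul_sum_sub_sum_mul_sum {R : Type*} [CommRing R] (hk : 2 ≤ k)
    (w x y : ι → R) (hy : ∑ i, y i = 0) :
    ∑ I ∈ powersetCard k univ,
        ((∑ i ∈ I, w i) * ∑ i ∈ I, x i * y i - (∑ i ∈ I, w i * x i) * ∑ i ∈ I, y i)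
      = (Fintype.card ι - 2).choose (k - 2) * (∑ i, w i) * ∑ i, x i * y i := by
  rw [sum_sub_distrib, sum_powersetCard_sum_mul_sum hk, sum_powersetCard_sum_mul_sum hk, hy]
  simp only [mul_assoc]
  ring

end Counting

lemma Nat.sub_one_mul_choose_sub_two {R : Type*} [CommRing R] {n k : ℕ} (hn : 2 ≤ n)
    (hk : 2 ≤ k) :
    ((n : R) - 1) * (n - 2).choose (k - 2) = ((k : R) - 1) * (n - 1).choose (k - 1) := by
  have h := Nat.add_one_mul_choose_eq (n - 2) (k - 2)
  rw [show n - 2 + 1 = n - 1 by omega, show k - 2 + 1 = k - 1 by omega] at h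
  have h' := congrArg (Nat.cast : ℕ → R) h
  push_cast [Nat.cast_sub (by omega : 1 ≤ n), Nat.cast_sub (by omega : 1 ≤ k)] at h'
  linear_combination h'

lemma Matrix.vecMulVec_self_mulVec_dotProduct {ι R : Type*} [Fintype ι] [CommSemiring R]
    (u x z : ι → R) : (vecMulVec u u *ᵥ x) ⬝ᵥ z = (u ⬝ᵥ x) * (u ⬝ᵥ z) := by
  rw [vecMulVec_mulVec, op_smul_eq_smul, smul_dotProduct, smul_eq_mul]

section QuadraticForm

variable {ι K : Type*} [Fintype ι] [DecidableEq ι] [Field K] {L : ι → K} (I : Finset ι)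
  (x y : ι → K)

lemma dotProduct_mul_indicator (w z : ι → K) :
    (fun i => w i * if i ∈ I then 1 else 0) ⬝ᵥ z = ∑ i ∈ I, w i * z i := by
  simp [dotProduct, ← Fintype.sum_ite_mem]

lemma diagonal_indicator_mul_inv_mulVec_dotProduct (hL : ∀ i, L i ≠ 0) :
    (diagonal (fun i => (if i ∈ I then 1 else 0) * (L i)⁻¹) *ᵥ x) ⬝ᵥ (diagonal L *ᵥ y)
      = ∑ i ∈ I, x i * y i := by
  rw [← Fintype.sum_ite_mem]
  refine sum_congr rfl fun i _ => ?_
  simp only [mulVec_diagonal]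
  split_ifs
  · field_simp [hL i]
  · ring

lemma diagonal_sub_smul_vecMulVec_mulVec_dotProduct (hL : ∀ i, L i ≠ 0) (a : K) :
    ((diagonal (fun i => (if i ∈ I then 1 else 0) * (L i)⁻¹)
        - a • vecMulVec (fun i => (L i)⁻¹ * if i ∈ I then 1 else 0)
            (fun i => (L i)⁻¹ * if i ∈ I then 1 else 0)) *ᵥ x) ⬝ᵥ (diagonal L *ᵥ y)
      = ∑ i ∈ I, x i * y i - a * ((∑ i ∈ I, (L i)⁻¹ * x i) * ∑ i ∈ I, y i) := by
  rw [sub_mulVec, sub_dotProduct, smul_mulVec, smul_dotProduct, vecMulVec_self_mulVec_dotProduct,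
    diagonal_indicator_mul_inv_mulVec_dotProduct I x y hL, dotProduct_mul_indicator,
    dotProduct_mul_indicator, smul_eq_mul]
  congr 3
  refine sum_congr rfl fun i _ => ?_
  rw [mulVec_diagonal]
  field_simp [hL i]

end QuadraticForm

/-- Under the sampling distribution `P(I) ∝ e_Iᵀ L⁻¹ e_I` over subsets of size τ,
for all x and all y with ∑ y i = 0, `𝔼_I[⟨G_I x, y⟩_L] = ((τ−1)/(n−1)) ⟨x, y⟩`. -/
theorem stmt6 {n : ℕ} (τ : ℕ) (hτ : 2 ≤ τ) (hτn : τ ≤ n)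
    (L : Fin n → ℝ) (hL : ∀ i, 0 < L i)
    (x y : Fin n → ℝ) (hy : ∑ i, y i = 0) :
    let eI : Finset (Fin n) → (Fin n → ℝ) := fun I i => if i ∈ I then 1 else 0
    let c : Finset (Fin n) → ℝ := fun I => ∑ i ∈ I, (L i)⁻¹
    let v : Finset (Fin n) → (Fin n → ℝ) := fun I i => (L i)⁻¹ * eI I i
    let G : Finset (Fin n) → Matrix (Fin n) (Fin n) ℝ := fun I =>
      Matrix.diagonal (fun i => eI I i * (L i)⁻¹) -
        (c I)⁻¹ • Matrix.vecMulVec (v I) (v I)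
    let Psets := Finset.powersetCard τ (Finset.univ : Finset (Fin n))
    let p : Finset (Fin n) → ℝ := fun I => c I / ∑ J ∈ Psets, c J
    ∑ I ∈ Psets, p I * ((G I *ᵥ x) ⬝ᵥ (Matrix.diagonal L *ᵥ y))
      = (((τ : ℝ) - 1) / ((n : ℝ) - 1)) * (x ⬝ᵥ y) := by
  intro eI c v G Psets p
  have hn : 2 ≤ n := hτ.trans hτn
  have hc : ∀ I ∈ Psets, c I ≠ 0 := fun I hI =>
    (sum_pos (fun i _ => inv_pos.2 (hL i))
      (card_pos.1 (by rw [(mem_powersetCard.1 hI).2]; omega))).ne'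
  have hform : ∀ I ∈ Psets, c I * ((G I *ᵥ x) ⬝ᵥ (diagonal L *ᵥ y))
      = c I * ∑ i ∈ I, x i * y i - (∑ i ∈ I, (L i)⁻¹ * x i) * ∑ i ∈ I, y i := fun I hI => by
    rw [show (G I *ᵥ x) ⬝ᵥ (diagonal L *ᵥ y) = _ from
      diagonal_sub_smul_vecMulVec_mulVec_dotProduct I x y (fun i => (hL i).ne') (c I)⁻¹,
      mul_sub, mul_inv_cancel_left₀ (hc I hI)]
  set A : ℝ := Nat.cast ((n - 2).choose (τ - 2))
  set B : ℝ := Nat.cast ((n - 1).choose (τ - 1))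
  set T : ℝ := ∑ i, (L i)⁻¹
  have hS : ∑ J ∈ Psets, c J = B * T := by
    simpa using sum_powersetCard_sum (by omega) fun i => (L i)⁻¹
  have hB : B ≠ 0 := Nat.cast_ne_zero.2 (Nat.choose_pos (by omega)).ne'
  have hT : T ≠ 0 :=
    (sum_pos (fun i _ => inv_pos.2 (hL i)) (univ_nonempty_iff.2 ⟨⟨0, by omega⟩⟩)).ne'
  calc ∑ I ∈ Psets, p I * ((G I *ᵥ x) ⬝ᵥ (diagonal L *ᵥ y))
      = (∑ I ∈ Psets, c I * ((G I *ᵥ x) ⬝ᵥ (diagonal L *ᵥ y))) / ∑ J ∈ Psets, c J := by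
        rw [sum_div]
        exact sum_congr rfl fun I _ => div_mul_eq_mul_div ..
    _ = A * T * (x ⬝ᵥ y) / (B * T) := by
        rw [sum_congr rfl hform, sum_powersetCard_sum_mul_sum_sub_sum_mul_sum hτ _ _ _ hy, hS]
        simp only [Fintype.card_fin, dotProduct]
        rfl
    _ = (((τ : ℝ) - 1) / ((n : ℝ) - 1)) * (x ⬝ᵥ y) := by
        have hn1 : (n : ℝ) - 1 ≠ 0 := by
          linarith [show (2 : ℝ) ≤ n by exact_mod_cast hn]
        field_simp
        linear_combination (x ⬝ᵥ y) * Nat.sub_one_mul_choose_sub_two (R := ℝ) hn hτ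
end

section
/- Linear convergence of constrained RBCD: let h(x) = Σ_i h_i(x_i) with each h_i L_i-smooth and μ-strongly convex, x* the minimizer over C = {x : Σ_i x_i = 0}, and sample I of size τ with probability ∝ e_Iᵀ L⁻¹ e_I. For x ∈ C and y = x − G_I ∇h(x), one has 𝔼_I[h(y)] − h(x*) ≤ (1 − ((τ−1)/(n−1)) (μ/L_max)) (h(x) − h(x*)). -/
/-!
Write `a = L⁻¹` and `g = ∇h(x)`. The step `G_I g` is `a_i (g_i - m_I)` on `I` and `0` off `I`,
where `m_I` is the `a`-weighted mean of `g` over `I`; by the descent lemma it decreases `h` by at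
least `½ Var_I`, the `a`-weighted variance of `g` over `I` (this is `½ ‖G_I ∇h(x)‖²_L`).
Since `c_I Var_I = ½ ∑_{i,j ∈ I} a_i a_j (g_i - g_j)²`, sampling `I` with probability `∝ c_I`
turns `𝔼 Var_I` into a double count over pairs, which gives `(τ-1)/(n-1) Var_{[n]}`.
Finally strong convexity on the hyperplane `∑ x_i = 0` bounds `h(x) - h(x*)` by
`∑ (g_i - t)² / (2μ)` for every constant `t`; taking `t = m_{[n]}` and `L_i ≤ L_max` bounds it by
`L_max Var_{[n]} / (2μ)`.
-/

open Matrix Finset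

section DoubleCounting

variable {α ι M : Type*} [DecidableEq α] [AddCommMonoid M]

theorem sum_powersetCard_sum_ite_subset (s : Finset α) {k r : ℕ} (hrk : r ≤ k) (u : Finset ι)
    (T : ι → Finset α) (f : ι → M) (hT : ∀ x ∈ u, f x ≠ 0 → T x ⊆ s ∧ #(T x) = r) :
    ∑ I ∈ s.powersetCard k, ∑ x ∈ u, (if T x ⊆ I then f x else 0)
      = (#s - r).choose (k - r) • ∑ x ∈ u, f x := by
  rw [sum_comm, smul_sum]
  refine sum_congr rfl fun x hx => ?_
  by_cases hfx : f x = 0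
  · simp [hfx]
  obtain ⟨hTs, rfl⟩ := hT x hx hfx
  rw [← sum_filter, sum_const, card_filter_powersetCard_subset _ _ _ hTs hrk]

theorem sum_powersetCard_sum_s12 (s : Finset α) {k : ℕ} (hk : 1 ≤ k) (f : α → M) :
    ∑ I ∈ s.powersetCard k, ∑ i ∈ I, f i = (#s - 1).choose (k - 1) • ∑ i ∈ s, f i := by
  rw [← sum_powersetCard_sum_ite_subset s hk s singleton f
    (fun i hi _ => ⟨singleton_subset_iff.2 hi, card_singleton i⟩)]
  refine sum_congr rfl fun I hI => ?_
  simp only [singleton_subset_iff]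
  rw [sum_ite_mem, inter_eq_right.2 (mem_powersetCard.1 hI).1]

theorem sum_powersetCard_sum_sum (s : Finset α) {k : ℕ} (hk : 2 ≤ k) (φ : α → α → M)
    (hφ : ∀ i, φ i i = 0) :
    ∑ I ∈ s.powersetCard k, ∑ i ∈ I, ∑ j ∈ I, φ i j
      = (#s - 2).choose (k - 2) • ∑ i ∈ s, ∑ j ∈ s, φ i j := by
  rw [← sum_product', ← sum_powersetCard_sum_ite_subset s hk (s ×ˢ s) (fun p => {p.1, p.2})]
  · refine sum_congr rfl fun I hI => ?_
    have hIs := (mem_powersetCard.1 hI).1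
    simp only [sum_product, insert_subset_iff, singleton_subset_iff, ite_and]
    simp [sum_ite_mem, inter_eq_right.2 hIs]
  · rintro ⟨i, j⟩ hij hφij
    have hne : i ≠ j := by rintro rfl; exact hφij (hφ i)
    obtain ⟨hi, hj⟩ := mem_product.1 hij
    exact ⟨insert_subset hi (singleton_subset_iff.2 hj), card_pair hne⟩

end DoubleCounting

section WeightedVariance

variable {ι : Type*}

noncomputable def weightedVariance (s : Finset ι) (w g : ι → ℝ) : ℝ :=
  ∑ i ∈ s, w i * (g i - s.centerMass w g) ^ 2

theorem sum_mul_sub_centerMass {s : Finset ι} {w : ι → ℝ} (hw : ∑ i ∈ s, w i ≠ 0)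
    (g : ι → ℝ) : ∑ i ∈ s, w i * (g i - s.centerMass w g) = 0 := by
  simp only [centerMass, smul_eq_mul, mul_sub, sum_sub_distrib, ← sum_mul]
  field_simp
  ring

theorem sum_mul_weightedVariance {s : Finset ι} {w : ι → ℝ} (hw : ∑ i ∈ s, w i ≠ 0)
    (g : ι → ℝ) :
    (∑ i ∈ s, w i) * weightedVariance s w g
      = ∑ i ∈ s, ∑ j ∈ s, w i * w j * (g i - g j) ^ 2 / 2 := by
  set u : ι → ℝ := fun i => g i - s.centerMass w g
  have hu : ∑ i ∈ s, w i * u i = 0 := sum_mul_sub_centerMass hw g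
  have hsplit : ∀ i j, w i * w j * (g i - g j) ^ 2 / 2
      = (w i * u i ^ 2 * w j + w i * (w j * u j ^ 2)) / 2 - (w i * u i) * (w j * u j) := by
    intro i j; simp only [u]; ring
  simp only [hsplit, sum_sub_distrib, ← sum_div, sum_add_distrib, ← sum_mul, ← mul_sum, hu]
  simp only [weightedVariance, u]
  ring

theorem sum_powersetCard_weightedVariance [DecidableEq ι] {s : Finset ι} {k : ℕ} (hk : 2 ≤ k)
    (hks : k ≤ #s) {w : ι → ℝ} (hw : ∀ i ∈ s, 0 < w i) (g : ι → ℝ) :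
    ∑ I ∈ s.powersetCard k,
        (∑ i ∈ I, w i) / (∑ J ∈ s.powersetCard k, ∑ j ∈ J, w j) * weightedVariance I w g
      = ((k : ℝ) - 1) / ((#s : ℝ) - 1) * weightedVariance s w g := by
  have hpos : ∀ I ⊆ s, I.Nonempty → 0 < ∑ i ∈ I, w i := fun I hIs hI =>
    sum_pos (fun i hi => hw i (hIs hi)) hI
  have hs : 0 < ∑ i ∈ s, w i := hpos s subset_rfl (card_pos.1 (by omega))
  have hnum : ∑ I ∈ s.powersetCard k, (∑ i ∈ I, w i) * weightedVariance I w g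
      = (#s - 2).choose (k - 2) * ((∑ i ∈ s, w i) * weightedVariance s w g) := by
    have hI : ∀ I ∈ s.powersetCard k, (∑ i ∈ I, w i) * weightedVariance I w g
        = ∑ i ∈ I, ∑ j ∈ I, w i * w j * (g i - g j) ^ 2 / 2 := fun I hI => by
      obtain ⟨hIs, hIk⟩ := mem_powersetCard.1 hI
      exact sum_mul_weightedVariance (hpos I hIs (card_pos.1 (by omega))).ne' g
    rw [sum_congr rfl hI, sum_powersetCard_sum_sum s hk _ (fun i => by ring),
      sum_mul_weightedVariance hs.ne', nsmul_eq_mul]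
  have hden : ∑ J ∈ s.powersetCard k, ∑ j ∈ J, w j
      = (#s - 1).choose (k - 1) * ∑ i ∈ s, w i := by
    rw [sum_powersetCard_sum_s12 s (by omega), nsmul_eq_mul]
  have hchoose : ((#s : ℝ) - 1) * (#s - 2).choose (k - 2)
      = (#s - 1).choose (k - 1) * ((k : ℝ) - 1) := by
    have h := Nat.add_one_mul_choose_eq (#s - 2) (k - 2)
    rw [show #s - 2 + 1 = #s - 1 by omega, show k - 2 + 1 = k - 1 by omega] at h
    have h' : ((#s - 1 : ℕ) : ℝ) * (#s - 2).choose (k - 2)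
        = (#s - 1).choose (k - 1) * ((k - 1 : ℕ) : ℝ) := by
      exact_mod_cast h
    rwa [Nat.cast_sub (by omega), Nat.cast_sub (by omega), Nat.cast_one] at h'
  have hB : (0 : ℝ) < (#s - 1).choose (k - 1) := by exact_mod_cast Nat.choose_pos (by omega)
  have hn : (0 : ℝ) < (#s : ℝ) - 1 := by
    have : (2 : ℝ) ≤ #s := by exact_mod_cast hk.trans hks
    linarith
  simp only [div_mul_eq_mul_div, ← sum_div, hnum, hden]
  field_simp
  linear_combination weightedVariance s w g * hchoose

end WeightedVariance

section BlockStep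

variable {ι : Type*} [Fintype ι] [DecidableEq ι]

noncomputable def blockStep (I : Finset ι) (a v : ι → ℝ) : ι → ℝ :=
  fun i => if i ∈ I then a i * (v i - I.centerMass a v) else 0

theorem mulVec_eq_blockStep (I : Finset ι) (a v : ι → ℝ) :
    (diagonal (fun i => (if i ∈ I then 1 else 0) * a i) -
        (∑ i ∈ I, a i)⁻¹ • vecMulVec (fun i => a i * if i ∈ I then 1 else 0)
          (fun i => a i * if i ∈ I then 1 else 0)) *ᵥ v = blockStep I a v := by
  have hdot : (fun i => a i * if i ∈ I then 1 else 0) ⬝ᵥ v = ∑ i ∈ I, a i * v i := by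
    simp only [dotProduct, mul_ite, mul_one, mul_zero, ite_mul, zero_mul, sum_ite_mem,
      univ_inter]
  ext i
  simp only [sub_mulVec, smul_mulVec, mulVec_diagonal, vecMulVec_mulVec, hdot, op_smul_eq_mul,
    Pi.sub_apply, Pi.smul_apply, smul_eq_mul, blockStep, centerMass]
  split_ifs <;> ring

theorem sum_mul_blockStep {I : Finset ι} {a : ι → ℝ} (ha : ∑ i ∈ I, a i ≠ 0) (v : ι → ℝ) :
    ∑ i, v i * blockStep I a v i = weightedVariance I a v := by
  have hsplit : ∀ i, v i * (a i * (v i - I.centerMass a v))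
      = a i * (v i - I.centerMass a v) ^ 2 + I.centerMass a v * (a i * (v i - I.centerMass a v)) :=
    fun i => by ring
  simp only [blockStep, mul_ite, mul_zero, sum_ite_mem, univ_inter, hsplit, sum_add_distrib,
    ← mul_sum, sum_mul_sub_centerMass ha v, mul_zero, add_zero, weightedVariance]

theorem sum_inv_mul_blockStep_sq {I : Finset ι} {a : ι → ℝ} (ha : ∀ i ∈ I, a i ≠ 0)
    (v : ι → ℝ) : ∑ i, (a i)⁻¹ * blockStep I a v i ^ 2 = weightedVariance I a v := by
  simp only [blockStep, ite_pow, ne_eq, OfNat.ofNat_ne_zero, not_false_eq_true, zero_pow,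
    mul_ite, mul_zero, sum_ite_mem, univ_inter, weightedVariance]
  refine sum_congr rfl fun i hi => ?_
  field_simp [ha i hi]

end BlockStep

section Separable

variable {ι : Type*} [Fintype ι] {h g : ι → ℝ → ℝ}

theorem sum_sub_le_of_smooth {L : ι → ℝ}
    (hsmooth : ∀ i x y, h i x ≤ h i y + g i y * (x - y) + L i / 2 * (x - y) ^ 2) (x d : ι → ℝ) :
    ∑ i, h i (x i - d i)
      ≤ ∑ i, h i (x i) - ∑ i, g i (x i) * d i + (∑ i, L i * d i ^ 2) / 2 := by
  have hi : ∀ i, h i (x i - d i) ≤ h i (x i) - g i (x i) * d i + L i * d i ^ 2 / 2 := fun i =>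
    calc h i (x i - d i) ≤ h i (x i) + g i (x i) * (x i - d i - x i)
          + L i / 2 * (x i - d i - x i) ^ 2 := hsmooth i _ _
      _ = h i (x i) - g i (x i) * d i + L i * d i ^ 2 / 2 := by ring
  calc ∑ i, h i (x i - d i) ≤ ∑ i, (h i (x i) - g i (x i) * d i + L i * d i ^ 2 / 2) :=
        sum_le_sum fun i _ => hi i
    _ = _ := by rw [sum_add_distrib, sum_sub_distrib, sum_div]

theorem sum_sub_blockStep_le [DecidableEq ι] {L : ι → ℝ} (hL : ∀ i, 0 < L i)
    (hsmooth : ∀ i x y, h i x ≤ h i y + g i y * (x - y) + L i / 2 * (x - y) ^ 2) (x : ι → ℝ)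
    {I : Finset ι} (hI : I.Nonempty) :
    ∑ i, h i (x i - blockStep I (fun i => (L i)⁻¹) (fun i => g i (x i)) i)
      ≤ ∑ i, h i (x i) - weightedVariance I (fun i => (L i)⁻¹) (fun i => g i (x i)) / 2 := by
  have hsmooth_step := sum_sub_le_of_smooth hsmooth x
    (blockStep I (fun i => (L i)⁻¹) (fun i => g i (x i)))
  have hsq := sum_inv_mul_blockStep_sq (I := I) (fun i _ => (inv_pos.2 (hL i)).ne')
    fun i => g i (x i)
  simp only [inv_inv] at hsq
  rw [sum_mul_blockStep (sum_pos (fun i _ => inv_pos.2 (hL i)) hI).ne', hsq] at hsmooth_step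
  linarith

theorem sum_powersetCard_mul_sum_sub_blockStep_le [DecidableEq ι] {L : ι → ℝ}
    (hL : ∀ i, 0 < L i)
    (hsmooth : ∀ i x y, h i x ≤ h i y + g i y * (x - y) + L i / 2 * (x - y) ^ 2) (x : ι → ℝ)
    {k : ℕ} (hk : 2 ≤ k) (hkι : k ≤ Fintype.card ι) :
    ∑ I ∈ univ.powersetCard k,
        (∑ i ∈ I, (L i)⁻¹) / (∑ J ∈ univ.powersetCard k, ∑ j ∈ J, (L j)⁻¹)
          * ∑ i, h i (x i - blockStep I (fun i => (L i)⁻¹) (fun i => g i (x i)) i)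
      ≤ ∑ i, h i (x i) - ((k : ℝ) - 1) / ((Fintype.card ι : ℝ) - 1)
          * weightedVariance univ (fun i => (L i)⁻¹) (fun i => g i (x i)) / 2 := by
  set V : Finset ι → ℝ := fun I => weightedVariance I (fun i => (L i)⁻¹) (fun i => g i (x i))
  set c : Finset ι → ℝ := fun I => ∑ i ∈ I, (L i)⁻¹
  have hnonempty : ∀ I ∈ (univ : Finset ι).powersetCard k, I.Nonempty := fun I hI =>
    card_pos.1 (by rw [mem_powersetCard_univ.1 hI]; omega)
  have hc : ∀ I ∈ (univ : Finset ι).powersetCard k, 0 < c I := fun I hI =>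
    sum_pos (fun i _ => inv_pos.2 (hL i)) (hnonempty I hI)
  have hC : 0 < ∑ J ∈ univ.powersetCard k, c J :=
    sum_pos hc (powersetCard_nonempty.2 (by simpa using hkι))
  have hp : ∑ I ∈ univ.powersetCard k, c I / ∑ J ∈ univ.powersetCard k, c J = 1 := by
    rw [← sum_div, div_self hC.ne']
  calc _ ≤ ∑ I ∈ univ.powersetCard k,
          c I / (∑ J ∈ univ.powersetCard k, c J) * (∑ i, h i (x i) - V I / 2) := by
        gcongr with I hI
        · exact div_nonneg (hc I hI).le hC.le
        · exact sum_sub_blockStep_le hL hsmooth x (hnonempty I hI)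
    _ = _ := by
        simp only [mul_sub, sum_sub_distrib, ← sum_mul, hp, one_mul, mul_div_assoc', ← sum_div,
          c, V, sum_powersetCard_weightedVariance (s := univ) hk (by simpa using hkι)
            (fun i _ => inv_pos.2 (hL i)), card_univ]

/-- Since `x*` and `x` have the same coordinate sum, the gradient may be shifted by any constant
`t` before applying Young's inequality. -/
theorem sum_sub_le_sum_sq_div_of_strongConvex {μ : ℝ} (hμ : 0 < μ)
    (hsc : ∀ i x y, h i y + g i y * (x - y) + μ / 2 * (x - y) ^ 2 ≤ h i x)
    {x xstar : ι → ℝ} (hsum : ∑ i, xstar i = ∑ i, x i) (t : ℝ) :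
    ∑ i, h i (x i) - ∑ i, h i (xstar i) ≤ ∑ i, (g i (x i) - t) ^ 2 / (2 * μ) := by
  have hi : ∀ i, h i (x i) - h i (xstar i)
      ≤ (g i (x i) - t) ^ 2 / (2 * μ) - t * (xstar i - x i) := fun i => by
    have hsq : 0 ≤ (g i (x i) - t + μ * (xstar i - x i)) ^ 2 / (2 * μ) := by positivity
    have hexpand : (g i (x i) - t + μ * (xstar i - x i)) ^ 2 / (2 * μ)
        = (g i (x i) - t) ^ 2 / (2 * μ) + (g i (x i) - t) * (xstar i - x i)
          + μ / 2 * (xstar i - x i) ^ 2 := by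
      field_simp
      ring
    linarith [hsc i (xstar i) (x i)]
  calc ∑ i, h i (x i) - ∑ i, h i (xstar i) = ∑ i, (h i (x i) - h i (xstar i)) :=
        (sum_sub_distrib ..).symm
    _ ≤ ∑ i, ((g i (x i) - t) ^ 2 / (2 * μ) - t * (xstar i - x i)) := sum_le_sum fun i _ => hi i
    _ = _ := by rw [sum_sub_distrib, ← mul_sum, sum_sub_distrib, hsum, sub_self, mul_zero, sub_zero]

theorem two_mul_div_mul_sub_le_weightedVariance [Nonempty ι] {L : ι → ℝ} (hL : ∀ i, 0 < L i)
    {Lmax : ℝ} (hLmax : ∀ i, L i ≤ Lmax) {μ : ℝ} (hμ : 0 < μ)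
    (hsc : ∀ i x y, h i y + g i y * (x - y) + μ / 2 * (x - y) ^ 2 ≤ h i x)
    {x xstar : ι → ℝ} (hsum : ∑ i, xstar i = ∑ i, x i) :
    2 * μ / Lmax * (∑ i, h i (x i) - ∑ i, h i (xstar i))
      ≤ weightedVariance univ (fun i => (L i)⁻¹) (fun i => g i (x i)) := by
  have hLmax_pos : 0 < Lmax := (hL (Classical.arbitrary ι)).trans_le (hLmax _)
  set t := univ.centerMass (fun i => (L i)⁻¹) (fun i => g i (x i))
  have hgap := sum_sub_le_sum_sq_div_of_strongConvex hμ hsc hsum t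
  have hsq : ∑ i, (g i (x i) - t) ^ 2
      ≤ Lmax * weightedVariance univ (fun i => (L i)⁻¹) (fun i => g i (x i)) := by
    rw [weightedVariance, mul_sum]
    refine sum_le_sum fun i _ => ?_
    have h1 : 1 ≤ Lmax * (L i)⁻¹ := by
      rw [← div_eq_mul_inv, one_le_div (hL i)]
      exact hLmax i
    nlinarith [sq_nonneg (g i (x i) - t)]
  rw [← sum_div, le_div_iff₀ (by positivity)] at hgap
  rw [div_mul_eq_mul_div, div_le_iff₀ hLmax_pos]
  linarith

end Separable

theorem stmt12_general {n : ℕ} (τ : ℕ) (hτ : 2 ≤ τ) (hτn : τ ≤ n)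
    (L : Fin n → ℝ) (hL : ∀ i, 0 < L i)
    (Lmax : ℝ) (hLmax : ∀ i, L i ≤ Lmax) (μ : ℝ) (hμ : 0 < μ)
    (h : Fin n → ℝ → ℝ) (g : Fin n → ℝ → ℝ)
    (hsmooth : ∀ i x y, h i x ≤ h i y + g i y * (x - y) + L i / 2 * (x - y) ^ 2)
    (hsc : ∀ i x y, h i y + g i y * (x - y) + μ / 2 * (x - y) ^ 2 ≤ h i x)
    (xstar : Fin n → ℝ) (hfeas : ∑ i, xstar i = 0)
    (x : Fin n → ℝ) (hx : ∑ i, x i = 0) :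
    let eI : Finset (Fin n) → (Fin n → ℝ) := fun I i => if i ∈ I then 1 else 0
    let c : Finset (Fin n) → ℝ := fun I => ∑ i ∈ I, (L i)⁻¹
    let v : Finset (Fin n) → (Fin n → ℝ) := fun I i => (L i)⁻¹ * eI I i
    let G : Finset (Fin n) → Matrix (Fin n) (Fin n) ℝ := fun I =>
      Matrix.diagonal (fun i => eI I i * (L i)⁻¹) -
        (c I)⁻¹ • Matrix.vecMulVec (v I) (v I)
    let Psets := Finset.powersetCard τ (Finset.univ : Finset (Fin n))
    let p : Finset (Fin n) → ℝ := fun I => c I / ∑ J ∈ Psets, c J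
    let H : (Fin n → ℝ) → ℝ := fun z => ∑ i, h i (z i)
    let gradH : (Fin n → ℝ) → (Fin n → ℝ) := fun z j => g j (z j)
    (∑ I ∈ Psets, p I * H (x - G I *ᵥ gradH x)) - H xstar
      ≤ (1 - (((τ : ℝ) - 1) / ((n : ℝ) - 1)) * (μ / Lmax)) * (H x - H xstar) := by
  intro eI c v G Psets p H gradH
  have : Nonempty (Fin n) := ⟨⟨0, by omega⟩⟩
  set ρ : ℝ := ((τ : ℝ) - 1) / ((n : ℝ) - 1)
  have hstep : ∀ I, H (x - G I *ᵥ gradH x)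
      = ∑ i, h i (x i - blockStep I (fun i => (L i)⁻¹) (gradH x) i) := fun I => by
    rw [show G I *ᵥ gradH x = blockStep I _ (gradH x) from mulVec_eq_blockStep I _ _]
    rfl
  have hdescent := sum_powersetCard_mul_sum_sub_blockStep_le hL hsmooth x hτ
    (by simpa using hτn)
  rw [Fintype.card_fin] at hdescent
  have hgrad : 2 * μ / Lmax * (H x - H xstar)
      ≤ weightedVariance univ (fun i => (L i)⁻¹) (gradH x) :=
    two_mul_div_mul_sub_le_weightedVariance hL hLmax hμ hsc (by rw [hfeas, hx])
  have hρ : 0 ≤ ρ := div_nonneg (by linarith [(Nat.ofNat_le_cast.2 hτ : (2 : ℝ) ≤ τ)])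
    (by linarith [(Nat.ofNat_le_cast.2 (hτ.trans hτn) : (2 : ℝ) ≤ n)])
  simp only [hstep]
  linear_combination hdescent + (mul_le_mul_of_nonneg_left hgrad hρ) / 2

/-- Linear convergence of constrained RBCD: for separable h with L_i-smooth and
μ-strongly convex components, x* minimizer over C, feasible x, and
y = x − G_I ∇h(x) with I sampled with probability ∝ e_Iᵀ L⁻¹ e_I among size-τ
subsets, `𝔼_I[h(y)] − h(x*) ≤ (1 − ((τ−1)/(n−1)) μ/L_max)(h(x) − h(x*))`. -/
theorem stmt12 {n : ℕ} (τ : ℕ) (hτ : 2 ≤ τ) (hτn : τ ≤ n)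
    (L : Fin n → ℝ) (hL : ∀ i, 0 < L i)
    (Lmax : ℝ) (hLmax : ∀ i, L i ≤ Lmax) (μ : ℝ) (hμ : 0 < μ)
    (h : Fin n → ℝ → ℝ) (g : Fin n → ℝ → ℝ)
    (hderiv : ∀ i x, HasDerivAt (h i) (g i x) x)
    (hsmooth : ∀ i x y, h i x ≤ h i y + g i y * (x - y) + L i / 2 * (x - y) ^ 2)
    (hsc : ∀ i x y, h i y + g i y * (x - y) + μ / 2 * (x - y) ^ 2 ≤ h i x)
    (xstar : Fin n → ℝ) (hfeas : ∑ i, xstar i = 0)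
    (hopt : ∀ z : Fin n → ℝ, (∑ i, z i = 0) → (∑ i, h i (xstar i)) ≤ ∑ i, h i (z i))
    (x : Fin n → ℝ) (hx : ∑ i, x i = 0) :
    let eI : Finset (Fin n) → (Fin n → ℝ) := fun I i => if i ∈ I then 1 else 0
    let c : Finset (Fin n) → ℝ := fun I => ∑ i ∈ I, (L i)⁻¹
    let v : Finset (Fin n) → (Fin n → ℝ) := fun I i => (L i)⁻¹ * eI I i
    let G : Finset (Fin n) → Matrix (Fin n) (Fin n) ℝ := fun I =>
      Matrix.diagonal (fun i => eI I i * (L i)⁻¹) -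
        (c I)⁻¹ • Matrix.vecMulVec (v I) (v I)
    let Psets := Finset.powersetCard τ (Finset.univ : Finset (Fin n))
    let p : Finset (Fin n) → ℝ := fun I => c I / ∑ J ∈ Psets, c J
    let H : (Fin n → ℝ) → ℝ := fun z => ∑ i, h i (z i)
    let gradH : (Fin n → ℝ) → (Fin n → ℝ) := fun z j => g j (z j)
    (∑ I ∈ Psets, p I * H (x - G I *ᵥ gradH x)) - H xstar
      ≤ (1 - (((τ : ℝ) - 1) / ((n : ℝ) - 1)) * (μ / Lmax)) * (H x - H xstar) :=
  stmt12_general τ hτ hτn L hL Lmax hLmax μ hμ h g hsmooth hsc xstar hfeas x hx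
end
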